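/- Let Q : ℝ² → ℝ be a compactly supported, bounded measurable function (thought of as a space-time kernel Q(t,x)) that integrates to zero, annihilates the functions (t,x) ↦ 1 and (t,x) ↦ x, and let P denote the heat kernel on ℝ (with P(t,x) = 0 for t ≤ 0). Then there exists a constant C such that the space-time convolution P ⋆ Q satisfies |(P ⋆ Q)(z)| ≤ C (|z|^{-1} ∧ |z|^{-3}) for all z ≠ 0, where |z| = |x| + √|t| denotes the parabolic norm of z = (t,x). -/

import Mathlib

/-!
Let `supp Q ⊆ [-r, r]²` and `|Q| ≤ M`. Near the origin, `|z| ≤ 4r`, each time slice `P(t, ·)` is a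
probability density, so `|P ⋆ Q| ≤ 2rM`, while `|z|⁻¹ ∧ |z|⁻³` is bounded below there.

Far away, `|z| ≥ 4r`, the two moment conditions let us replace `P(z - w)` by the first-order Taylor
remainder `P(z - w) - P(z) + w₂ ∂ₓP(z)`, which is `O(r² |z|⁻³)`: the spatial increment is
controlled by `∂ₓ²P`, and the time increment by `∂ₜP = ∂ₓ²P` when both times are positive and by
`P(t, x) ≲ t |(t, x)|⁻³` otherwise. Both bounds on `P` follow from parabolic scaling,
`|∂ₓ²P(t, x)| ≲ |(t, x)|⁻³`, and moving `z` by `w` changes `|z|` by at most `|w| ≤ 2r ≤ |z| / 2`.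
-/

open MeasureTheory Real

/-- The heat kernel on `ℝ` as a space-time kernel, vanishing for `t ≤ 0`.
Here `z = (t, x)`. -/
noncomputable def heatKernelST (z : ℝ × ℝ) : ℝ :=
  if 0 < z.1 then (Real.sqrt (4 * Real.pi * z.1))⁻¹ * Real.exp (-(z.2 ^ 2) / (4 * z.1)) else 0

/-- The parabolic norm `|(t,x)| = √|t| + |x|` on space-time `ℝ²`. -/
noncomputable def pNorm (z : ℝ × ℝ) : ℝ := Real.sqrt |z.1| + |z.2|

open Set

lemma abs_sub_le_of_abs_deriv_le {f f' : ℝ → ℝ} {a b C : ℝ}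
    (hf : ∀ x ∈ uIcc a b, HasDerivAt f (f' x) x) (hC : ∀ x ∈ uIcc a b, |f' x| ≤ C) :
    |f b - f a| ≤ C * |b - a| :=
  (convex_uIcc a b).norm_image_sub_le_of_norm_hasDerivWithin_le
    (fun x hx => (hf x hx).hasDerivWithinAt) hC left_mem_uIcc right_mem_uIcc

lemma abs_sub_sub_mul_le_of_abs_deriv2_le {f f' f'' : ℝ → ℝ} {a b C : ℝ}
    (hf : ∀ x ∈ uIcc a b, HasDerivAt f (f' x) x) (hf' : ∀ x ∈ uIcc a b, HasDerivAt f' (f'' x) x)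
    (hC : ∀ x ∈ uIcc a b, |f'' x| ≤ C) :
    |f b - f a - (b - a) * f' a| ≤ C * (b - a) ^ 2 := by
  have hC0 : 0 ≤ C := (abs_nonneg _).trans (hC a left_mem_uIcc)
  have hderiv : ∀ x ∈ uIcc a b, |f' x - f' a| ≤ C * |b - a| := fun x hx => by
    have hsub : uIcc a x ⊆ uIcc a b := uIcc_subset_uIcc left_mem_uIcc hx
    calc |f' x - f' a| ≤ C * |x - a| :=
          abs_sub_le_of_abs_deriv_le (fun y hy => hf' y (hsub hy)) (fun y hy => hC y (hsub hy))
      _ ≤ C * |b - a| := mul_le_mul_of_nonneg_left (abs_sub_left_of_mem_uIcc hx) hC0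
  have h := abs_sub_le_of_abs_deriv_le (f := fun x => f x - x * f' a)
    (fun x hx => (hf x hx).sub ((hasDerivAt_id' x).mul_const (f' a))) (by simpa using hderiv)
  calc |f b - f a - (b - a) * f' a| = |f b - b * f' a - (f a - a * f' a)| := by ring_nf
    _ ≤ C * |b - a| * |b - a| := h
    _ = C * (b - a) ^ 2 := by rw [mul_assoc, ← abs_mul, ← sq, abs_sq]

lemma one_add_pow_three_le_exp (v : ℝ) : (1 + v) ^ 3 ≤ 32 * exp (v ^ 2 / 4) := by
  have h := Real.sum_le_exp_of_nonneg (by positivity : 0 ≤ v ^ 2 / 4) 4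
  norm_num [Finset.sum_range_succ, Nat.factorial] at h
  nlinarith [sq_nonneg (v - 2), sq_nonneg (v ^ 2 - 4)]

lemma sq_add_two_mul_one_add_pow_three_le_exp (v : ℝ) :
    (v ^ 2 + 2) * (1 + v) ^ 3 ≤ 512 * exp (v ^ 2 / 4) := by
  have h := Real.sum_le_exp_of_nonneg (by positivity : 0 ≤ v ^ 2 / 4) 4
  norm_num [Finset.sum_range_succ, Nat.factorial] at h
  nlinarith [sq_nonneg (v - 2), sq_nonneg (v ^ 2 - 4), sq_nonneg (v ^ 2 - 2 * v),
    sq_nonneg (v ^ 3 - 4 * v), sq_nonneg (v + 1)]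

lemma integrable_of_forall_notMem_eq_zero {α E : Type*} [MeasurableSpace α] {μ : Measure α}
    [NormedAddCommGroup E] {f : α → E} {s : Set α} {C : ℝ} (hs : μ s < ⊤)
    (hm : AEStronglyMeasurable f μ) (hf : ∀ x ∉ s, f x = 0) (hC : ∀ x, ‖f x‖ ≤ C) :
    Integrable f μ :=
  (integrableOn_iff_integrable_of_support_subset fun x hx => by_contra fun h => hx (hf x h)).1
    (Measure.integrableOn_of_bounded hs.ne hm (ae_of_all _ hC))

lemma norm_integral_le_of_forall_notMem_eq_zero {α E : Type*} [MeasurableSpace α]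
    {μ : Measure α} [NormedAddCommGroup E] [NormedSpace ℝ E] {f : α → E} {s : Set α} {C : ℝ}
    (hs : μ s < ⊤) (hf : ∀ x ∉ s, f x = 0) (hC : ∀ x ∈ s, ‖f x‖ ≤ C) :
    ‖∫ x, f x ∂μ‖ ≤ C * μ.real s := by
  rw [← setIntegral_eq_integral_of_forall_compl_eq_zero hf]
  exact norm_setIntegral_le_of_norm_le_const hs hC

lemma integral_mul_eq_integral_sub_add_mul {α : Type*} [MeasurableSpace α] {μ : Measure α}
    {f φ Q : α → ℝ} (a b : ℝ) (hfQ : Integrable (fun x => f x * Q x) μ) (hQ : Integrable Q μ)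
    (hφQ : Integrable (fun x => φ x * Q x) μ) (h0 : ∫ x, Q x ∂μ = 0)
    (h1 : ∫ x, φ x * Q x ∂μ = 0) :
    ∫ x, f x * Q x ∂μ = ∫ x, (f x - a + φ x * b) * Q x ∂μ := by
  have hsplit : (fun x => (f x - a + φ x * b) * Q x)
      = fun x => f x * Q x - a * Q x + b * (φ x * Q x) := by
    ext x; ring
  have hsub : Integrable (fun x => f x * Q x - a * Q x) μ := hfQ.sub (hQ.const_mul a)
  rw [hsplit, integral_add hsub (hφQ.const_mul b), integral_sub hfQ (hQ.const_mul a),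
    integral_const_mul, integral_const_mul, h0, h1]
  ring

lemma abs_mul_le_of_ne_zero {α : Type*} {f g : α → ℝ} {C M : ℝ} (hC : 0 ≤ C)
    (hf : ∀ x, g x ≠ 0 → |f x| ≤ C) (hg : ∀ x, |g x| ≤ M) (x : α) : |f x * g x| ≤ C * M := by
  by_cases hx : g x = 0
  · simpa [hx] using mul_nonneg hC ((abs_nonneg _).trans (hg x))
  · rw [abs_mul]
    exact mul_le_mul (hf x hx) (hg x) (abs_nonneg _) hC

lemma HasCompactSupport.exists_one_le_forall_norm_le {E F : Type*} [SeminormedAddCommGroup E]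
    [Zero F] {f : E → F} (hf : HasCompactSupport f) :
    ∃ r, 1 ≤ r ∧ ∀ x, f x ≠ 0 → ‖x‖ ≤ r := by
  obtain ⟨r, hr⟩ := hf.isBounded.subset_closedBall 0
  refine ⟨max r 1, le_max_right _ _, fun x hx => ?_⟩
  have := hr (subset_tsupport f hx)
  rw [mem_closedBall_zero_iff] at this
  exact this.trans (le_max_left _ _)

lemma min_inv_inv_pow_three {N : ℝ} (hN : 1 ≤ N) : min N⁻¹ (N ^ 3)⁻¹ = (N ^ 3)⁻¹ :=
  min_eq_right (inv_anti₀ (by positivity) (le_self_pow₀ hN (by norm_num)))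

lemma inv_pow_three_le_min_inv {N A : ℝ} (hN : 0 < N) (hNA : N ≤ A) (hA : 1 ≤ A) :
    (A ^ 3)⁻¹ ≤ min N⁻¹ (N ^ 3)⁻¹ :=
  le_min (inv_anti₀ hN (hNA.trans (le_self_pow₀ hA (by norm_num))))
    (inv_anti₀ (by positivity) (pow_le_pow_left₀ hN.le hNA 3))

lemma pNorm_nonneg (z : ℝ × ℝ) : 0 ≤ pNorm z := by
  unfold pNorm; positivity

lemma pNorm_pos {z : ℝ × ℝ} (hz : z ≠ 0) : 0 < pNorm z := by
  rcases eq_or_ne z.1 0 with h1 | h1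
  · have h2 : z.2 ≠ 0 := fun h2 => hz (Prod.ext h1 h2)
    have := abs_pos.2 h2
    unfold pNorm; positivity
  · have := Real.sqrt_pos.2 (abs_pos.2 h1)
    unfold pNorm; positivity

lemma pNorm_add_le (z w : ℝ × ℝ) : pNorm (z + w) ≤ pNorm z + pNorm w := by
  have hsqrt : √|z.1 + w.1| ≤ √|z.1| + √|w.1| := by
    rw [Real.sqrt_le_iff]
    refine ⟨by positivity, ?_⟩
    nlinarith [abs_add_le z.1 w.1, Real.sq_sqrt (abs_nonneg z.1), Real.sq_sqrt (abs_nonneg w.1),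
      mul_nonneg (Real.sqrt_nonneg |z.1|) (Real.sqrt_nonneg |w.1|)]
  simp only [pNorm, Prod.fst_add, Prod.snd_add]
  linarith [abs_add_le z.2 w.2]

lemma pNorm_le_two_mul {w : ℝ × ℝ} {r : ℝ} (hr : 1 ≤ r) (hw : ‖w‖ ≤ r) : pNorm w ≤ 2 * r := by
  have h1 : |w.1| ≤ r := (norm_fst_le w).trans hw
  have h2 : |w.2| ≤ r := (norm_snd_le w).trans hw
  have : √|w.1| ≤ r := by
    rw [Real.sqrt_le_left (by linarith)]
    nlinarith
  unfold pNorm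
  linarith

lemma half_pNorm_le_pNorm_sub {z w : ℝ × ℝ} {r : ℝ} (hr : 1 ≤ r) (hw : ‖w‖ ≤ r)
    (hz : 4 * r ≤ pNorm z) : pNorm z / 2 ≤ pNorm (z - w) := by
  have := pNorm_add_le (z - w) w
  rw [sub_add_cancel] at this
  linarith [pNorm_le_two_mul hr hw]

/-- `P(t, x)` for `0 < t`; see `heatKernelST_of_pos`. -/
noncomputable def heatKernel (t x : ℝ) : ℝ :=
  (√(4 * π * t))⁻¹ * exp (-(x ^ 2) / (4 * t))

noncomputable def heatKernelDx (t x : ℝ) : ℝ := -(x / (2 * t)) * heatKernel t x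

noncomputable def heatKernelDxx (t x : ℝ) : ℝ :=
  (x ^ 2 / (4 * t ^ 2) - 1 / (2 * t)) * heatKernel t x

lemma hasDerivAt_heatKernel_space {t : ℝ} (ht : 0 < t) (x : ℝ) :
    HasDerivAt (heatKernel t) (heatKernelDx t x) x := by
  refine ((((hasDerivAt_pow 2 x).fun_neg.div_const (4 * t)).exp).const_mul
    (√(4 * π * t))⁻¹).congr_deriv ?_
  unfold heatKernelDx heatKernel
  field_simp
  ring

lemma hasDerivAt_heatKernelDx_space {t : ℝ} (ht : 0 < t) (x : ℝ) :
    HasDerivAt (heatKernelDx t) (heatKernelDxx t x) x := by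
  refine (((hasDerivAt_id' x).div_const (2 * t)).fun_neg.mul
    (hasDerivAt_heatKernel_space ht x)).congr_deriv ?_
  unfold heatKernelDxx heatKernelDx
  field_simp
  ring

/-- The heat equation `∂ₜ P = ∂ₓ² P`. -/
lemma hasDerivAt_heatKernel_time {t : ℝ} (ht : 0 < t) (x : ℝ) :
    HasDerivAt (fun s => heatKernel s x) (heatKernelDxx t x) t := by
  have hpos : 0 < 4 * π * t := by positivity
  have hsqrt := ((hasDerivAt_id' t).const_mul (4 * π)).sqrt hpos.ne'
  have hexp := (((hasDerivAt_id' t).const_mul 4).fun_inv (by positivity)).const_mul (-(x ^ 2))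
  refine ((hsqrt.fun_inv (Real.sqrt_pos.2 hpos).ne').mul hexp.exp).congr_deriv ?_
  have hsq : √(4 * π * t) ^ 2 = 4 * π * t := Real.sq_sqrt hpos.le
  unfold heatKernelDxx heatKernel
  field_simp
  rw [hsq]
  ring

lemma heatKernel_nonneg (t x : ℝ) : 0 ≤ heatKernel t x := by
  unfold heatKernel; positivity

lemma heatKernel_sq_le_exp {u : ℝ} (hu : 0 < u) (x : ℝ) :
    heatKernel (u ^ 2) x ≤ (2 * u * exp ((|x| / u) ^ 2 / 4))⁻¹ := by
  have h2 : 2 * u ≤ √(4 * π * u ^ 2) := by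
    rw [show 4 * π * u ^ 2 = π * (2 * u) ^ 2 by ring, Real.sqrt_mul Real.pi_pos.le,
      Real.sqrt_sq (by positivity)]
    have : 1 ≤ √π := Real.one_le_sqrt.2 (by linarith [Real.pi_gt_three])
    nlinarith
  have hexp : exp (-(x ^ 2) / (4 * u ^ 2)) = (exp ((|x| / u) ^ 2 / 4))⁻¹ := by
    rw [← Real.exp_neg, div_pow, sq_abs]
    ring_nf
  rw [heatKernel, hexp, mul_inv]
  gcongr

lemma pNorm_sq {u : ℝ} (hu : 0 < u) (x : ℝ) : pNorm (u ^ 2, x) = u * (1 + |x| / u) := by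
  rw [pNorm, abs_of_pos (by positivity), Real.sqrt_sq hu.le]
  field_simp

lemma heatKernel_le_pNorm {t : ℝ} (ht : 0 < t) (x : ℝ) :
    heatKernel t x ≤ 16 * t / pNorm (t, x) ^ 3 := by
  obtain ⟨u, hu, rfl⟩ : ∃ u, 0 < u ∧ t = u ^ 2 := ⟨√t, Real.sqrt_pos.2 ht, (sq_sqrt ht.le).symm⟩
  refine (heatKernel_sq_le_exp hu x).trans ?_
  rw [pNorm_sq hu, inv_eq_one_div, div_le_div_iff₀ (by positivity) (by positivity)]
  nlinarith [one_add_pow_three_le_exp (|x| / u), pow_pos hu 3]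

lemma abs_heatKernelDxx_le {t : ℝ} (ht : 0 < t) (x : ℝ) :
    |heatKernelDxx t x| ≤ 64 / pNorm (t, x) ^ 3 := by
  obtain ⟨u, hu, rfl⟩ : ∃ u, 0 < u ∧ t = u ^ 2 := ⟨√t, Real.sqrt_pos.2 ht, (sq_sqrt ht.le).symm⟩
  set v := |x| / u
  have hcoef : |x ^ 2 / (4 * (u ^ 2) ^ 2) - 1 / (2 * u ^ 2)| ≤ (v ^ 2 + 2) / (4 * u ^ 2) := by
    have hx : x ^ 2 = v ^ 2 * u ^ 2 := by
      rw [div_pow, sq_abs, div_mul_cancel₀ _ (by positivity)]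
    rw [hx, abs_le]
    constructor <;> field_simp <;> nlinarith [sq_nonneg v]
  rw [heatKernelDxx, abs_mul, abs_of_nonneg (heatKernel_nonneg _ x)]
  calc _ ≤ (v ^ 2 + 2) / (4 * u ^ 2) * (2 * u * exp (v ^ 2 / 4))⁻¹ :=
        mul_le_mul hcoef (heatKernel_sq_le_exp hu x) (heatKernel_nonneg _ x) (by positivity)
    _ ≤ 64 / pNorm (u ^ 2, x) ^ 3 := by
      rw [pNorm_sq hu, ← div_eq_mul_inv, div_div, div_le_div_iff₀ (by positivity)
        (by positivity)]
      nlinarith [sq_add_two_mul_one_add_pow_three_le_exp v, pow_pos hu 3]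

noncomputable def heatKernelSTDx (z : ℝ × ℝ) : ℝ := if 0 < z.1 then heatKernelDx z.1 z.2 else 0

lemma heatKernelST_of_pos {z : ℝ × ℝ} (h : 0 < z.1) : heatKernelST z = heatKernel z.1 z.2 :=
  if_pos h

lemma heatKernelST_of_nonpos {z : ℝ × ℝ} (h : z.1 ≤ 0) : heatKernelST z = 0 :=
  if_neg h.not_gt

lemma heatKernelST_nonneg (z : ℝ × ℝ) : 0 ≤ heatKernelST z := by
  unfold heatKernelST; split_ifs <;> positivity

lemma heatKernelST_le (z : ℝ × ℝ) : heatKernelST z ≤ 16 * max z.1 0 / pNorm z ^ 3 := by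
  rcases le_or_gt z.1 0 with ht | ht
  · simp [heatKernelST_of_nonpos ht, ht]
  · rw [heatKernelST_of_pos ht, max_eq_left ht.le]
    exact heatKernel_le_pNorm ht z.2

lemma div_pNorm_sub_pow_three_le {z w : ℝ × ℝ} {r c : ℝ} (hr : 1 ≤ r) (hw : ‖w‖ ≤ r)
    (hz : 4 * r ≤ pNorm z) (hc : 0 ≤ c) : c / pNorm (z - w) ^ 3 ≤ 8 * c / pNorm z ^ 3 := by
  have hN : 0 < pNorm z / 2 := by linarith
  calc c / pNorm (z - w) ^ 3 ≤ c / (pNorm z / 2) ^ 3 := by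
        gcongr; exact half_pNorm_le_pNorm_sub hr hw hz
    _ = 8 * c / pNorm z ^ 3 := by field_simp; ring

lemma abs_heatKernelDxx_le_of_far {z w : ℝ × ℝ} {r : ℝ} (hr : 1 ≤ r) (hw : ‖w‖ ≤ r)
    (hz : 4 * r ≤ pNorm z) (ht : 0 < (z - w).1) :
    |heatKernelDxx (z - w).1 (z - w).2| ≤ 512 / pNorm z ^ 3 :=
  calc _ ≤ 64 / pNorm (z - w) ^ 3 := abs_heatKernelDxx_le ht _
    _ ≤ 8 * 64 / pNorm z ^ 3 := div_pNorm_sub_pow_three_le hr hw hz (by norm_num)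
    _ = 512 / pNorm z ^ 3 := by norm_num

lemma heatKernelST_le_of_far {z w : ℝ × ℝ} {r : ℝ} (hr : 1 ≤ r) (hw : ‖w‖ ≤ r)
    (hz : 4 * r ≤ pNorm z) (ht : (z - w).1 ≤ r) : heatKernelST (z - w) ≤ 128 * r / pNorm z ^ 3 :=
  calc _ ≤ 16 * max (z - w).1 0 / pNorm (z - w) ^ 3 := heatKernelST_le _
    _ ≤ 8 * (16 * max (z - w).1 0) / pNorm z ^ 3 :=
        div_pNorm_sub_pow_three_le hr hw hz (by positivity)
    _ ≤ 128 * r / pNorm z ^ 3 := by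
        have := pNorm_nonneg z
        have := max_le ht (by linarith : (0 : ℝ) ≤ r)
        exact div_le_div_of_nonneg_right (by linarith) (by positivity)

lemma abs_heatKernelST_sub_add_mul_dx_le {z : ℝ × ℝ} {y r : ℝ} (hr : 1 ≤ r) (hy : |y| ≤ r)
    (hz : 4 * r ≤ pNorm z) :
    |heatKernelST (z.1, z.2 - y) - heatKernelST z + y * heatKernelSTDx z|
      ≤ 512 * r ^ 2 / pNorm z ^ 3 := by
  have hN := pNorm_nonneg z
  rcases le_or_gt z.1 0 with ht | ht
  · rw [heatKernelST_of_nonpos (z := z) ht, heatKernelST_of_nonpos (z := (z.1, z.2 - y)) ht,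
      heatKernelSTDx, if_neg ht.not_gt]
    simp only [sub_self, mul_zero, add_zero, abs_zero]
    positivity
  have hbound : ∀ ξ ∈ uIcc z.2 (z.2 - y), |heatKernelDxx z.1 ξ| ≤ 512 / pNorm z ^ 3 := by
    intro ξ hξ
    have hw : ‖((0 : ℝ), z.2 - ξ)‖ ≤ r := by
      have := abs_sub_left_of_mem_uIcc hξ
      rw [sub_sub_cancel_left, abs_neg, abs_sub_comm] at this
      simpa using this.trans hy
    simpa using abs_heatKernelDxx_le_of_far hr hw hz (by simpa using ht)
  have h := abs_sub_sub_mul_le_of_abs_deriv2_le (fun ξ _ => hasDerivAt_heatKernel_space ht ξ)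
    (fun ξ _ => hasDerivAt_heatKernelDx_space ht ξ) hbound
  rw [heatKernelST_of_pos (z := z) ht, heatKernelST_of_pos (z := (z.1, z.2 - y)) ht,
    heatKernelSTDx, if_pos ht]
  calc _ = |heatKernel z.1 (z.2 - y) - heatKernel z.1 z.2
        - (z.2 - y - z.2) * heatKernelDx z.1 z.2| := by ring_nf
    _ ≤ 512 / pNorm z ^ 3 * (z.2 - y - z.2) ^ 2 := h
    _ ≤ 512 / pNorm z ^ 3 * r ^ 2 := by
      rw [sub_sub_cancel_left, neg_sq]
      exact mul_le_mul_of_nonneg_left (sq_le_sq' (abs_le.1 hy).1 (abs_le.1 hy).2) (by positivity)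
    _ = 512 * r ^ 2 / pNorm z ^ 3 := by ring

lemma abs_heatKernelST_sub_time_le {z : ℝ × ℝ} {s y r : ℝ} (hr : 1 ≤ r) (hs : |s| ≤ r)
    (hy : |y| ≤ r) (hz : 4 * r ≤ pNorm z) :
    |heatKernelST (z.1 - s, z.2 - y) - heatKernelST (z.1, z.2 - y)|
      ≤ 512 * r ^ 2 / pNorm z ^ 3 := by
  have hN := pNorm_nonneg z
  have hpt : ∀ σ, (σ, z.2 - y) = z - (z.1 - σ, y) := fun σ => by ext <;> simp
  have hw : ∀ σ ∈ uIcc z.1 (z.1 - s), ‖(z.1 - σ, y)‖ ≤ r := fun σ hσ => by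
    have := abs_sub_left_of_mem_uIcc hσ
    rw [sub_sub_cancel_left, abs_neg, abs_sub_comm] at this
    exact max_le (this.trans hs) hy
  by_cases hpos : 0 < z.1 - s ∧ 0 < z.1
  · have hσ : ∀ σ ∈ uIcc z.1 (z.1 - s), 0 < σ := fun σ hσ =>
      (lt_min hpos.2 hpos.1).trans_le hσ.1
    rw [heatKernelST_of_pos (z := (z.1 - s, z.2 - y)) hpos.1,
      heatKernelST_of_pos (z := (z.1, z.2 - y)) hpos.2]
    calc _ ≤ 512 / pNorm z ^ 3 * |z.1 - s - z.1| :=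
          abs_sub_le_of_abs_deriv_le (fun σ hσ' => hasDerivAt_heatKernel_time (hσ σ hσ') _)
            fun σ hσ' => by
              have := abs_heatKernelDxx_le_of_far hr (hw σ hσ') hz (by rw [← hpt]; exact hσ σ hσ')
              rwa [← hpt] at this
      _ ≤ 512 / pNorm z ^ 3 * r ^ 2 := by
        rw [sub_sub_cancel_left, abs_neg]
        exact mul_le_mul_of_nonneg_left (hs.trans (by nlinarith)) (by positivity)
      _ = 512 * r ^ 2 / pNorm z ^ 3 := by ring
  · -- one of the two times is `≤ 0`, so both are `≤ r`
    rw [not_and_or, not_lt, not_lt] at hpos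
    have hsmall : ∀ σ ∈ uIcc z.1 (z.1 - s), σ ≤ r →
        heatKernelST (σ, z.2 - y) ≤ 128 * r / pNorm z ^ 3 := fun σ hσ hσr => by
      rw [hpt]
      exact heatKernelST_le_of_far hr (hw σ hσ) hz (by rwa [← hpt])
    have h1 := hsmall _ right_mem_uIcc (by rcases hpos with h | h <;> linarith [abs_le.1 hs])
    have h2 := hsmall _ left_mem_uIcc (by rcases hpos with h | h <;> linarith [abs_le.1 hs])
    have h3 := heatKernelST_nonneg (z.1 - s, z.2 - y)
    have h4 := heatKernelST_nonneg (z.1, z.2 - y)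
    calc _ ≤ 128 * r / pNorm z ^ 3 := abs_sub_le_iff.2 ⟨by linarith, by linarith⟩
      _ ≤ 512 * r ^ 2 / pNorm z ^ 3 := div_le_div_of_nonneg_right (by nlinarith) (by positivity)

lemma abs_heatKernelST_sub_taylor_le {z w : ℝ × ℝ} {r : ℝ} (hr : 1 ≤ r) (hw : ‖w‖ ≤ r)
    (hz : 4 * r ≤ pNorm z) :
    |heatKernelST (z - w) - heatKernelST z + w.2 * heatKernelSTDx z|
      ≤ 1024 * r ^ 2 / pNorm z ^ 3 := by
  have htime := abs_heatKernelST_sub_time_le hr ((norm_fst_le w).trans hw)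
    ((norm_snd_le w).trans hw) hz
  have hspace := abs_heatKernelST_sub_add_mul_dx_le hr ((norm_snd_le w).trans hw) hz
  calc _ = |(heatKernelST (z.1 - w.1, z.2 - w.2) - heatKernelST (z.1, z.2 - w.2))
        + (heatKernelST (z.1, z.2 - w.2) - heatKernelST z + w.2 * heatKernelSTDx z)| := by
        rw [show z - w = (z.1 - w.1, z.2 - w.2) from rfl]; ring_nf
    _ ≤ _ := (abs_add_le _ _).trans (add_le_add htime hspace)
    _ = 1024 * r ^ 2 / pNorm z ^ 3 := by ring

lemma heatKernelST_sub_eq_gaussianPDFReal {t : ℝ} (ht : 0 < t) (x y : ℝ) :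
    heatKernelST (t, x - y) = ProbabilityTheory.gaussianPDFReal x (2 * t).toNNReal y := by
  rw [heatKernelST_of_pos (z := (t, x - y)) ht, heatKernel, ProbabilityTheory.gaussianPDFReal,
    Real.coe_toNNReal _ (by positivity)]
  ring_nf

lemma lintegral_heatKernelST_sub_le_one (t x : ℝ) :
    ∫⁻ y, ENNReal.ofReal (heatKernelST (t, x - y)) ≤ 1 := by
  rcases le_or_gt t 0 with ht | ht
  · simp [heatKernelST_of_nonpos (z := (t, _)) ht]
  · simp_rw [heatKernelST_sub_eq_gaussianPDFReal ht]
    rw [ProbabilityTheory.lintegral_gaussianPDFReal_eq_one]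
    simpa using ht

@[fun_prop]
lemma measurable_heatKernelST : Measurable heatKernelST := by
  unfold heatKernelST
  exact Measurable.ite (measurableSet_lt measurable_const measurable_fst) (by fun_prop)
    measurable_const

lemma lintegral_heatKernelST_sub_mul_le {g : ℝ × ℝ → ℝ} {M r : ℝ} (hM : ∀ w, |g w| ≤ M)
    (hr : ∀ w, g w ≠ 0 → |w.1| ≤ r) (z : ℝ × ℝ) :
    ∫⁻ w, ENNReal.ofReal ‖heatKernelST (z - w) * g w‖ ≤ ENNReal.ofReal (2 * r * M) := by
  have hM0 : 0 ≤ M := (abs_nonneg _).trans (hM 0)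
  set c : ℝ → ENNReal := (Icc (-r) r).indicator fun _ => ENNReal.ofReal M
  have hc : Measurable c := measurable_const.indicator measurableSet_Icc
  calc ∫⁻ w, ENNReal.ofReal ‖heatKernelST (z - w) * g w‖
      ≤ ∫⁻ w : ℝ × ℝ, c w.1 * ENNReal.ofReal (heatKernelST (z.1 - w.1, z.2 - w.2)) := by
        refine lintegral_mono fun w => ?_
        by_cases hw : g w = 0
        · simp [hw]
        have hcw : c w.1 = ENNReal.ofReal M :=
          indicator_of_mem (show w.1 ∈ Icc (-r) r from abs_le.1 (hr w hw)) _
        rw [hcw, ← ENNReal.ofReal_mul hM0, norm_mul, Real.norm_of_nonneg (heatKernelST_nonneg _),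
          mul_comm]
        exact ENNReal.ofReal_le_ofReal
          (mul_le_mul_of_nonneg_right (hM w) (heatKernelST_nonneg _))
    _ = ∫⁻ s, ∫⁻ y, c s * ENNReal.ofReal (heatKernelST (z.1 - s, z.2 - y)) := by
        rw [Measure.volume_eq_prod, lintegral_prod _ (by fun_prop)]
    _ ≤ ∫⁻ s, c s := lintegral_mono fun s => by
        rw [lintegral_const_mul _ (by fun_prop)]
        exact mul_le_of_le_one_right' (lintegral_heatKernelST_sub_le_one _ _)
    _ = ENNReal.ofReal (2 * r * M) := by
        rw [lintegral_indicator_const measurableSet_Icc, Real.volume_Icc, ← ENNReal.ofReal_mul hM0]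
        ring_nf

noncomputable def heatConv (Q : ℝ × ℝ → ℝ) (z : ℝ × ℝ) : ℝ := ∫ w, heatKernelST (z - w) * Q w

section Convolution

variable {Q : ℝ × ℝ → ℝ} {M r : ℝ}

lemma integrable_heatKernelST_sub_mul (hQ : Measurable Q) (hM : ∀ w, |Q w| ≤ M)
    (hr : ∀ w, Q w ≠ 0 → |w.1| ≤ r) (z : ℝ × ℝ) :
    Integrable fun w => heatKernelST (z - w) * Q w :=
  ⟨(by fun_prop : Measurable _).aestronglyMeasurable, (hasFiniteIntegral_iff_norm _).2
    ((lintegral_heatKernelST_sub_mul_le hM hr z).trans_lt ENNReal.ofReal_lt_top)⟩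

lemma abs_heatConv_le (hr0 : 0 ≤ r) (hM : ∀ w, |Q w| ≤ M) (hr : ∀ w, Q w ≠ 0 → |w.1| ≤ r)
    (z : ℝ × ℝ) : |heatConv Q z| ≤ 2 * r * M := by
  have hM0 : 0 ≤ M := (abs_nonneg _).trans (hM 0)
  rw [heatConv, ← Real.norm_eq_abs]
  calc _ ≤ (∫⁻ w, ENNReal.ofReal ‖heatKernelST (z - w) * Q w‖).toReal :=
        norm_integral_le_lintegral_norm _
    _ ≤ (ENNReal.ofReal (2 * r * M)).toReal :=
        ENNReal.toReal_mono ENNReal.ofReal_ne_top (lintegral_heatKernelST_sub_mul_le hM hr z)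
    _ = 2 * r * M := ENNReal.toReal_ofReal (by positivity)

lemma abs_heatConv_le_of_far (hQ : Measurable Q) (hQsupp : HasCompactSupport Q)
    (hM : ∀ w, |Q w| ≤ M) (hr : 1 ≤ r) (hQr : ∀ w, Q w ≠ 0 → ‖w‖ ≤ r)
    (hQint : ∫ w, Q w = 0) (hQx : ∫ w, w.2 * Q w = 0) {z : ℝ × ℝ} (hz : 4 * r ≤ pNorm z) :
    |heatConv Q z| ≤ 1024 * r ^ 2 * M * volume.real (tsupport Q) / pNorm z ^ 3 := by
  have hM0 : 0 ≤ M := (abs_nonneg _).trans (hM 0)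
  have hN := pNorm_nonneg z
  have hK : volume (tsupport Q) < ⊤ := hQsupp.measure_lt_top
  have hoff : ∀ w ∉ tsupport Q, Q w = 0 := fun w hw => image_eq_zero_of_notMem_tsupport hw
  have hQi : Integrable Q :=
    integrable_of_forall_notMem_eq_zero hK hQ.aestronglyMeasurable hoff hM
  have hxQi : Integrable fun w : ℝ × ℝ => w.2 * Q w :=
    integrable_of_forall_notMem_eq_zero hK (by fun_prop) (fun w hw => by simp [hoff w hw])
      (abs_mul_le_of_ne_zero (by linarith) (fun w hw => (norm_snd_le w).trans (hQr w hw)) hM)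
  rw [heatConv, integral_mul_eq_integral_sub_add_mul (heatKernelST z) (heatKernelSTDx z)
    (integrable_heatKernelST_sub_mul hQ hM (fun w hw => (norm_fst_le w).trans (hQr w hw)) z)
    hQi hxQi hQint hQx, ← Real.norm_eq_abs]
  calc _ ≤ 1024 * r ^ 2 / pNorm z ^ 3 * M * volume.real (tsupport Q) :=
        norm_integral_le_of_forall_notMem_eq_zero hK (fun w hw => by simp [hoff w hw])
          fun w _ => abs_mul_le_of_ne_zero (by positivity)
            (fun w hw => abs_heatKernelST_sub_taylor_le hr (hQr w hw) hz) hM w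
    _ = 1024 * r ^ 2 * M * volume.real (tsupport Q) / pNorm z ^ 3 := by ring

end Convolution

/-- If `Q` is a compactly supported, bounded, measurable space-time kernel which integrates
to zero and annihilates `(t,x) ↦ x`, then the space-time convolution `P ⋆ Q` with the heat
kernel is bounded by `C (|z|⁻¹ ∧ |z|⁻³)` in the parabolic norm. -/
theorem heatKernel_conv_bound (Q : ℝ × ℝ → ℝ)
    (hQmeas : Measurable Q) (hQsupp : HasCompactSupport Q)
    (hQbdd : ∃ M : ℝ, ∀ z, |Q z| ≤ M)
    (hQint : ∫ z : ℝ × ℝ, Q z = 0)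
    (hQx : ∫ z : ℝ × ℝ, z.2 * Q z = 0) :
    ∃ C : ℝ, ∀ z : ℝ × ℝ, z ≠ 0 →
      |∫ w : ℝ × ℝ, heatKernelST (z - w) * Q w|
        ≤ C * min (pNorm z)⁻¹ ((pNorm z ^ 3)⁻¹) := by
  obtain ⟨M, hM⟩ := hQbdd
  have hM0 : 0 ≤ M := (abs_nonneg _).trans (hM 0)
  obtain ⟨r, hr, hQr⟩ := hQsupp.exists_one_le_forall_norm_le
  set V := volume.real (tsupport Q)
  refine ⟨max (128 * r ^ 4 * M) (1024 * r ^ 2 * M * V), fun z hz => ?_⟩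
  have hN := pNorm_pos hz
  change |heatConv Q z| ≤ _
  rcases le_or_gt (pNorm z) (4 * r) with hnear | hfar
  · calc |heatConv Q z| ≤ 2 * r * M :=
          abs_heatConv_le (by linarith) hM (fun w hw => (norm_fst_le w).trans (hQr w hw)) z
      _ = 128 * r ^ 4 * M * ((4 * r) ^ 3)⁻¹ := by field_simp; ring
      _ ≤ _ := mul_le_mul (le_max_left _ _) (inv_pow_three_le_min_inv hN hnear (by linarith))
          (by positivity) (le_max_of_le_left (by positivity))
  · calc |heatConv Q z| ≤ 1024 * r ^ 2 * M * V / pNorm z ^ 3 :=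
          abs_heatConv_le_of_far hQmeas hQsupp hM hr hQr hQint hQx hfar.le
      _ = 1024 * r ^ 2 * M * V * min (pNorm z)⁻¹ ((pNorm z ^ 3)⁻¹) := by
          rw [min_inv_inv_pow_three (by linarith)]; ring
      _ ≤ _ := mul_le_mul_of_nonneg_right (le_max_right _ _) (by positivity)
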